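/- arXiv:2509.23365 — 2 statements merged into one kernel-verified Lean document; each statement's English description precedes it below -/
import Mathlib

section
/- Let α > 0 and let μ : [0, ∞) → ℝ^V be differentiable with μ(0) = 0 and μ'(t) = −α·∇L^coco(μ(t)) for all t ≥ 0. Then for all t ≥ 0 the coordinates of μ(t) are all equal to a common value μ̄(t), and the scalar function μ̄ satisfies the ordinary differential equation μ̄'(t) = (α/(n√K)) · (d_p − F(μ̄(t))), where F(μ) = (Σ_{u ∈ N_{c+1}} d_u·exp(λ(1{u ∈ N_c} + μ·d_u))) / (Σ_{u ∈ N_{c+1}} exp(λ(1{u ∈ N_c} + μ·d_u)) + n − |N_{c+1}|). -/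
/-!
Relabelling the graph by a permutation `π` turns the coconut loss of the relabelled instance at
`μ` into the loss of the original instance at `μ ∘ π`, so the averaged loss is invariant under
`μ ↦ μ ∘ σ` and its gradient field `G` is equivariant: `G (μ ∘ σ) = G μ ∘ σ`. Each partial
derivative is a difference of softmax averages of bounded weights, and such an average moves by
at most twice the change of the logits, so `G` is globally Lipschitz and the gradient flow is
unique. The flow started at the symmetric point `0` therefore commutes with every `σ`, i.e. `μ(t)`
is constant. At a constant point `G` is itself constant, so each coordinate is `1/n` of
`∑_w ∂_w ℓ^coco`, which equals `λ (F(μ̄) - d_p)`.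
-/

open Finset Filter Matrix

variable {V : Type*}

/-- `ball E r j` : set of vertices reachable from `r` within `j` steps along edges in `E`. -/
def ball [Fintype V] [DecidableEq V] (E : Finset (V × V)) (r : V) : ℕ → Finset V
  | 0 => {r}
  | j + 1 => Finset.univ.filter fun v => v ∈ ball E r j ∨ ∃ u ∈ ball E r j, (u, v) ∈ E

/-- in-degree of `v` restricted to sources in `N_c`. -/
def degc [Fintype V] [DecidableEq V] (E : Finset (V × V)) (r : V) (c : ℕ) (v : V) : ℕ :=
  ((ball E r c).filter fun u => (u, v) ∈ E).card

/-- λ = 1/√K with K = |N_c|. -/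
noncomputable def lamc [Fintype V] [DecidableEq V] (E : Finset (V × V)) (r : V) (c : ℕ) : ℝ :=
  1 / Real.sqrt ((ball E r c).card : ℝ)

/-- the logit ξ_v(μ). -/
noncomputable def xi [Fintype V] [DecidableEq V] (E : Finset (V × V)) (r : V) (c : ℕ)
    (μ : V → ℝ) (v : V) : ℝ :=
  lamc E r c * (if v ∈ ball E r c then 1 else 0)
    + lamc E r c * ∑ u ∈ (ball E r c).filter (fun u => (u, v) ∈ E), μ u

/-- BFS loss. -/
noncomputable def bfsLoss [Fintype V] [DecidableEq V] (E : Finset (V × V)) (r : V) (c : ℕ)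
    (μ : V → ℝ) : ℝ :=
  - Real.log ((∑ v ∈ ball E r (c + 1), Real.exp (xi E r c μ v)) /
      ∑ v : V, Real.exp (xi E r c μ v))

/-- edge set of the permuted instance. -/
def permE [Fintype V] [DecidableEq V] (π : Equiv.Perm V) (E : Finset (V × V)) :
    Finset (V × V) :=
  E.image fun e => (π e.1, π e.2)

/-- permutation-averaged BFS loss. -/
noncomputable def avgBfsLoss [Fintype V] [DecidableEq V] (E : Finset (V × V)) (r : V) (c : ℕ)
    (μ : V → ℝ) : ℝ :=
  ((Nat.factorial (Fintype.card V) : ℝ))⁻¹ *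
    ∑ π : Equiv.Perm V, bfsLoss (permE π E) (π r) c μ

/-- coconut loss with target `p`. -/
noncomputable def cocoLoss [Fintype V] [DecidableEq V] (E : Finset (V × V)) (r : V) (c : ℕ)
    (p : V) (μ : V → ℝ) : ℝ :=
  - Real.log (Real.exp (xi E r c μ p) / ∑ v : V, Real.exp (xi E r c μ v))

/-- permutation-averaged coconut loss. -/
noncomputable def avgCocoLoss [Fintype V] [DecidableEq V] (E : Finset (V × V)) (r : V) (c : ℕ)
    (p : V) (μ : V → ℝ) : ℝ :=
  ((Nat.factorial (Fintype.card V) : ℝ))⁻¹ *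
    ∑ π : Equiv.Perm V, cocoLoss (permE π E) (π r) c (π p) μ

/-- the scalar function F. -/
noncomputable def Fc [Fintype V] [DecidableEq V] (E : Finset (V × V)) (r : V) (c : ℕ)
    (x : ℝ) : ℝ :=
  (∑ u ∈ ball E r (c + 1), (degc E r c u : ℝ) *
      Real.exp (lamc E r c * ((if u ∈ ball E r c then 1 else 0) + x * (degc E r c u : ℝ))))
    / ((∑ u ∈ ball E r (c + 1),
        Real.exp (lamc E r c * ((if u ∈ ball E r c then 1 else 0) + x * (degc E r c u : ℝ))))
      + ((Fintype.card V : ℝ) - ((ball E r (c + 1)).card : ℝ)))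

open Function

section Softmax

variable {ι : Type*} [Fintype ι]

lemma sum_exp_pos [Nonempty ι] (z : ι → ℝ) : 0 < ∑ i, Real.exp (z i) :=
  sum_pos (fun _ _ => Real.exp_pos _) univ_nonempty

noncomputable def softmaxAvg (z χ : ι → ℝ) : ℝ :=
  (∑ i, χ i * Real.exp (z i)) / ∑ i, Real.exp (z i)

lemma softmaxAvg_const_mul (z χ : ι → ℝ) (a : ℝ) :
    softmaxAvg z (fun i => a * χ i) = a * softmaxAvg z χ := by
  simp only [softmaxAvg, mul_assoc, ← mul_sum, mul_div_assoc]

lemma sum_softmaxAvg {κ : Type*} (s : Finset κ) (z : ι → ℝ) (χ : κ → ι → ℝ) :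
    ∑ k ∈ s, softmaxAvg z (χ k) = softmaxAvg z fun i => ∑ k ∈ s, χ k i := by
  simp only [softmaxAvg, ← sum_div, sum_mul]
  rw [sum_comm]

lemma abs_softmaxAvg_le [Nonempty ι] (z : ι → ℝ) {χ : ι → ℝ} {C : ℝ} (hχ : ∀ i, |χ i| ≤ C) :
    |softmaxAvg z χ| ≤ C := by
  have hS := sum_exp_pos z
  rw [softmaxAvg, abs_div, abs_of_pos hS, div_le_iff₀ hS, mul_sum]
  refine (abs_sum_le_sum_abs _ _).trans (sum_le_sum fun i _ => ?_)
  rw [abs_mul, Real.abs_exp]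
  exact mul_le_mul_of_nonneg_right (hχ i) (Real.exp_pos _).le

lemma hasDerivAt_softmaxAvg [Nonempty ι] {z : ℝ → ι → ℝ} {z' : ι → ℝ} {y : ℝ}
    (hz : ∀ i, HasDerivAt (fun y => z y i) (z' i) y) (χ : ι → ℝ) :
    HasDerivAt (fun y => softmaxAvg (z y) χ)
      (softmaxAvg (z y) (χ * z') - softmaxAvg (z y) χ * softmaxAvg (z y) z') y := by
  have hS := sum_exp_pos (z y)
  have hN := HasDerivAt.fun_sum (u := univ) fun i _ => ((hz i).exp).const_mul (χ i)
  have hD := HasDerivAt.fun_sum (u := univ) fun i _ => (hz i).exp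
  refine (hN.div hD hS.ne').congr_deriv ?_
  have hχz : ∑ i, (χ * z') i * Real.exp (z y i) = ∑ i, χ i * (Real.exp (z y i) * z' i) :=
    sum_congr rfl fun i _ => by rw [Pi.mul_apply]; ring
  have hz' : ∑ i, z' i * Real.exp (z y i) = ∑ i, Real.exp (z y i) * z' i :=
    sum_congr rfl fun i _ => mul_comm _ _
  simp only [softmaxAvg, hχz, hz']
  field_simp

lemma abs_softmaxAvg_sub_le [Nonempty ι] {z z' χ : ι → ℝ} {B M : ℝ}
    (hχ : ∀ i, |χ i| ≤ B) (hz : ∀ i, |z i - z' i| ≤ M) :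
    |softmaxAvg z χ - softmaxAvg z' χ| ≤ 2 * B * M := by
  have hB : 0 ≤ B := (abs_nonneg _).trans (hχ (Classical.arbitrary ι))
  let zθ : ℝ → ι → ℝ := fun θ i => z' i + θ * (z i - z' i)
  have hzθ : ∀ θ i, HasDerivAt (fun θ => zθ θ i) (z i - z' i) θ := fun θ i =>
    (((hasDerivAt_id θ).mul_const (z i - z' i)).const_add (z' i)).congr_deriv (one_mul _)
  have hderiv : ∀ θ, |softmaxAvg (zθ θ) (χ * (z - z'))
      - softmaxAvg (zθ θ) χ * softmaxAvg (zθ θ) (z - z')| ≤ 2 * B * M := fun θ => by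
    have h1 := abs_softmaxAvg_le (zθ θ) (χ := χ * (z - z')) (C := B * M) fun i => by
      rw [Pi.mul_apply, abs_mul]
      exact mul_le_mul (hχ i) (hz i) (abs_nonneg _) hB
    have h2 := abs_softmaxAvg_le (zθ θ) hχ
    have h3 := abs_softmaxAvg_le (zθ θ) (χ := z - z') hz
    calc _ ≤ _ + |softmaxAvg (zθ θ) χ| * |softmaxAvg (zθ θ) (z - z')| :=
          (abs_sub _ _).trans_eq (by rw [abs_mul])
      _ ≤ B * M + B * M := add_le_add h1 (mul_le_mul h2 h3 (abs_nonneg _) hB)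
      _ = 2 * B * M := by ring
  have := norm_image_sub_le_of_norm_deriv_le_segment_01' (f := fun θ => softmaxAvg (zθ θ) χ)
    (fun θ _ => (hasDerivAt_softmaxAvg (hzθ θ) χ).hasDerivWithinAt) fun θ _ => hderiv θ
  simpa [zθ] using this

lemma hasDerivAt_neg_log_softmax [Nonempty ι] {z : ℝ → ι → ℝ} {z' : ι → ℝ} {y : ℝ}
    (hz : ∀ i, HasDerivAt (fun y => z y i) (z' i) y) (j : ι) :
    HasDerivAt (fun y => -Real.log (Real.exp (z y j) / ∑ i, Real.exp (z y i)))
      (-z' j + softmaxAvg (z y) z') y := by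
  have hS : ∀ y, 0 < ∑ i, Real.exp (z y i) := fun y => sum_exp_pos (z y)
  have hsplit : (fun y => -Real.log (Real.exp (z y j) / ∑ i, Real.exp (z y i)))
      = fun y => -z y j + Real.log (∑ i, Real.exp (z y i)) := funext fun y => by
    rw [Real.log_div (Real.exp_ne_zero _) (hS y).ne', Real.log_exp]
    ring
  rw [hsplit]
  refine ((hz j).neg.add
    ((HasDerivAt.fun_sum (u := univ) fun i _ => (hz i).exp).log (hS y).ne')).congr_deriv ?_
  simp only [softmaxAvg, mul_comm]

end Softmax

section Relabel

variable [Fintype V] [DecidableEq V] (E : Finset (V × V)) (r : V) (c : ℕ)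

lemma mem_permE_iff {π : Equiv.Perm V} {a b : V} : (π a, π b) ∈ permE π E ↔ (a, b) ∈ E := by
  simp [permE]

lemma ball_permE (π : Equiv.Perm V) (j : ℕ) :
    ball (permE π E) (π r) j = (ball E r j).image π := by
  induction j with
  | zero => simp [ball]
  | succ j ih =>
    ext v
    obtain ⟨w, rfl⟩ := π.surjective v
    simp only [ball, ih, mem_filter, mem_univ, true_and, π.injective.mem_finset_image,
      exists_mem_image, mem_permE_iff]

lemma lamc_permE (π : Equiv.Perm V) : lamc (permE π E) (π r) c = lamc E r c := by
  rw [lamc, lamc, ball_permE, card_image_of_injective _ π.injective]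

lemma xi_permE (π : Equiv.Perm V) (μ : V → ℝ) (v : V) :
    xi (permE π E) (π r) c μ (π v) = xi E r c (μ ∘ π) v := by
  rw [xi, xi, lamc_permE, ball_permE, filter_image, sum_image π.injective.injOn]
  simp only [π.injective.mem_finset_image, mem_permE_iff, Function.comp_apply]

lemma cocoLoss_permE (π : Equiv.Perm V) (p : V) (μ : V → ℝ) :
    cocoLoss (permE π E) (π r) c (π p) μ = cocoLoss E r c p (μ ∘ π) := by
  rw [cocoLoss, cocoLoss, ← Equiv.sum_comp π]
  simp only [xi_permE]

lemma avgCocoLoss_eq_sum_comp (p : V) (μ : V → ℝ) :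
    avgCocoLoss E r c p μ =
      (Nat.factorial (Fintype.card V) : ℝ)⁻¹ * ∑ π : Equiv.Perm V, cocoLoss E r c p (μ ∘ π) := by
  simp only [avgCocoLoss, cocoLoss_permE]

lemma avgCocoLoss_comp_perm (p : V) (μ : V → ℝ) (σ : Equiv.Perm V) :
    avgCocoLoss E r c p (μ ∘ σ) = avgCocoLoss E r c p μ := by
  rw [avgCocoLoss_eq_sum_comp, avgCocoLoss_eq_sum_comp,
    ← Equiv.sum_comp (Equiv.mulLeft σ) fun π => cocoLoss E r c p (μ ∘ π)]
  rfl

end Relabel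

section Gradient

variable [Fintype V] [DecidableEq V] (E : Finset (V × V)) (r : V) (c : ℕ)

noncomputable def xiPartial (w v : V) : ℝ :=
  lamc E r c * if w ∈ (ball E r c).filter (fun u => (u, v) ∈ E) then 1 else 0

lemma hasDerivAt_xi_update (ν : V → ℝ) (w v : V) (y : ℝ) :
    HasDerivAt (fun y => xi E r c (update ν w y) v) (xiPartial E r c w v) y := by
  have hsum := HasDerivAt.fun_sum (u := (ball E r c).filter (fun u => (u, v) ∈ E))
    fun u _ => hasDerivAt_pi.1 (hasDerivAt_update ν w y) u
  rw [sum_pi_single'] at hsum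
  exact (hsum.const_mul (lamc E r c)).const_add _

noncomputable def cocoGrad (p : V) (ν : V → ℝ) (w : V) : ℝ :=
  -xiPartial E r c w p + softmaxAvg (xi E r c ν) (xiPartial E r c w)

lemma hasDerivAt_cocoLoss_update [Nonempty V] (p : V) (ν : V → ℝ) (w : V) :
    HasDerivAt (fun y => cocoLoss E r c p (update ν w y)) (cocoGrad E r c p ν w) (ν w) := by
  have h := hasDerivAt_neg_log_softmax (fun v => hasDerivAt_xi_update E r c ν w v (ν w)) p
  rw [update_eq_self] at h
  exact h

noncomputable def avgCocoGrad (p : V) (μ : V → ℝ) (v : V) : ℝ :=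
  (Nat.factorial (Fintype.card V) : ℝ)⁻¹ *
    ∑ π : Equiv.Perm V, cocoGrad E r c p (μ ∘ π) (π.symm v)

lemma hasDerivAt_avgCocoLoss_update [Nonempty V] (p : V) (μ : V → ℝ) (v : V) :
    HasDerivAt (fun y => avgCocoLoss E r c p (update μ v y)) (avgCocoGrad E r c p μ v) (μ v) := by
  simp only [avgCocoLoss_eq_sum_comp, update_comp_equiv]
  refine (HasDerivAt.fun_sum fun π _ => ?_).const_mul _
  simpa using hasDerivAt_cocoLoss_update E r c p (μ ∘ π) (π.symm v)

lemma avgCocoGrad_comp_perm [Nonempty V] (p : V) (μ : V → ℝ) (σ : Equiv.Perm V) :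
    avgCocoGrad E r c p (μ ∘ σ) = avgCocoGrad E r c p μ ∘ σ := by
  funext v
  have hloss : (fun y => avgCocoLoss E r c p (update (μ ∘ σ) v y))
      = fun y => avgCocoLoss E r c p (update μ (σ v) y) := funext fun y => by
    rw [← avgCocoLoss_comp_perm E r c p (update μ (σ v) y) σ, update_comp_equiv,
      Equiv.symm_apply_apply]
  have h := hasDerivAt_avgCocoLoss_update E r c p (μ ∘ σ) v
  rw [hloss] at h
  exact h.unique (hasDerivAt_avgCocoLoss_update E r c p μ (σ v))

end Gradient

section Lipschitz

variable [Fintype V] [DecidableEq V] (E : Finset (V × V)) (r : V) (c : ℕ)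

lemma lamc_nonneg : 0 ≤ lamc E r c := by
  unfold lamc; positivity

lemma abs_xiPartial_le (w v : V) : |xiPartial E r c w v| ≤ lamc E r c := by
  rw [xiPartial, abs_mul, abs_of_nonneg (lamc_nonneg E r c)]
  exact mul_le_of_le_one_right (lamc_nonneg E r c) (by split_ifs <;> norm_num)

lemma abs_xi_sub_le {ν ν' : V → ℝ} {d : ℝ} (h : ∀ u, |ν u - ν' u| ≤ d) (v : V) :
    |xi E r c ν v - xi E r c ν' v| ≤ lamc E r c * ((ball E r c).card * d) := by
  have hd : 0 ≤ d := (abs_nonneg _).trans (h v)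
  rw [xi, xi, add_sub_add_left_eq_sub, ← mul_sub, ← sum_sub_distrib, abs_mul,
    abs_of_nonneg (lamc_nonneg E r c)]
  refine mul_le_mul_of_nonneg_left ?_ (lamc_nonneg E r c)
  calc _ ≤ ∑ u ∈ (ball E r c).filter (fun u => (u, v) ∈ E), d :=
        (abs_sum_le_sum_abs _ _).trans (sum_le_sum fun u _ => h u)
    _ ≤ _ := by
      rw [sum_const, nsmul_eq_mul]
      gcongr
      exact filter_subset _ _

lemma abs_cocoGrad_sub_le [Nonempty V] (p : V) {ν ν' : V → ℝ} {d : ℝ}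
    (h : ∀ u, |ν u - ν' u| ≤ d) (w : V) :
    |cocoGrad E r c p ν w - cocoGrad E r c p ν' w|
      ≤ 2 * lamc E r c ^ 2 * (ball E r c).card * d := by
  rw [cocoGrad, cocoGrad, add_sub_add_left_eq_sub]
  refine (abs_softmaxAvg_sub_le (abs_xiPartial_le E r c w) (abs_xi_sub_le E r c h)).trans_eq ?_
  ring

lemma lipschitzWith_avgCocoGrad [Nonempty V] (p : V) :
    LipschitzWith (2 * lamc E r c ^ 2 * (ball E r c).card).toNNReal (avgCocoGrad E r c p) := by
  refine LipschitzWith.of_dist_le' fun μ μ' => (dist_pi_le_iff (by positivity)).2 fun v => ?_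
  have hfac : (0 : ℝ) < Nat.factorial (Fintype.card V) := by positivity
  rw [Real.dist_eq, avgCocoGrad, avgCocoGrad, ← mul_sub, ← sum_sub_distrib, abs_mul,
    abs_inv, Nat.abs_cast]
  calc _ ≤ (Nat.factorial (Fintype.card V) : ℝ)⁻¹ *
        ∑ _π : Equiv.Perm V, 2 * lamc E r c ^ 2 * (ball E r c).card * dist μ μ' := by
        gcongr
        exact (abs_sum_le_sum_abs _ _).trans (sum_le_sum fun π _ =>
          abs_cocoGrad_sub_le E r c p (fun u => (Real.dist_eq _ _).symm.trans_le
            (dist_le_pi_dist μ μ' (π u))) _)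
    _ = _ := by
      rw [sum_const, card_univ, Fintype.card_perm, nsmul_eq_mul]
      field_simp

end Lipschitz

section ConstantPoint

variable [Fintype V] [DecidableEq V] (E : Finset (V × V)) (r : V) (c : ℕ)

lemma ball_subset_ball_succ (j : ℕ) : ball E r j ⊆ ball E r (j + 1) := fun v hv => by
  simp [ball, hv]

lemma degc_eq_zero_of_notMem {v : V} (hv : v ∉ ball E r (c + 1)) : degc E r c v = 0 := by
  simp only [ball, mem_filter, mem_univ, true_and, not_or, not_exists, not_and] at hv
  simpa [degc, filter_eq_empty_iff] using hv.2

lemma xi_const (x : ℝ) (v : V) :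
    xi E r c (fun _ => x) v
      = lamc E r c * ((if v ∈ ball E r c then 1 else 0) + x * degc E r c v) := by
  rw [xi, degc, sum_const, nsmul_eq_mul]
  ring

lemma softmaxAvg_xi_const (x : ℝ) :
    softmaxAvg (xi E r c fun _ => x) (fun v => (degc E r c v : ℝ)) = Fc E r c x := by
  have hout : ∀ v ∉ ball E r (c + 1), xi E r c (fun _ => x) v = 0 := fun v hv => by
    rw [xi_const, if_neg fun h => hv (ball_subset_ball_succ E r c h),
      degc_eq_zero_of_notMem E r c hv]
    simp
  have hnum : ∑ v, (degc E r c v : ℝ) * Real.exp (xi E r c (fun _ => x) v)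
      = ∑ v ∈ ball E r (c + 1), (degc E r c v : ℝ) * Real.exp (xi E r c (fun _ => x) v) :=
    (sum_subset (subset_univ _) fun v _ hv => by simp [degc_eq_zero_of_notMem E r c hv]).symm
  have hden : ∑ v, Real.exp (xi E r c (fun _ => x) v)
      = ∑ v ∈ ball E r (c + 1), Real.exp (xi E r c (fun _ => x) v)
        + ((Fintype.card V : ℝ) - (ball E r (c + 1)).card) := by
    rw [← sum_add_sum_compl (ball E r (c + 1))]
    congr 1
    rw [sum_congr rfl fun v hv => by rw [hout v (mem_compl.1 hv), Real.exp_zero], sum_const,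
      card_compl, nsmul_one, Nat.cast_sub (card_le_univ _)]
  rw [softmaxAvg, hnum, hden, Fc]
  simp only [xi_const]

lemma sum_xiPartial (v : V) : ∑ w, xiPartial E r c w v = lamc E r c * degc E r c v := by
  simp only [xiPartial]
  rw [degc, ← mul_sum, sum_boole, filter_mem_eq_inter, univ_inter]

lemma sum_cocoGrad (p : V) (ν : V → ℝ) :
    ∑ w, cocoGrad E r c p ν w
      = lamc E r c * (softmaxAvg (xi E r c ν) (fun v => (degc E r c v : ℝ)) - degc E r c p) := by
  simp only [cocoGrad, sum_add_distrib, sum_neg_distrib, sum_softmaxAvg, sum_xiPartial,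
    softmaxAvg_const_mul]
  ring

lemma avgCocoGrad_const [Nonempty V] (p : V) (x : ℝ) (v : V) :
    avgCocoGrad E r c p (fun _ => x) v
      = (Fc E r c x - degc E r c p) / (Fintype.card V * Real.sqrt (ball E r c).card) := by
  have hflat : ∀ w, avgCocoGrad E r c p (fun _ => x) w = avgCocoGrad E r c p (fun _ => x) v :=
    fun w => by
      have h := congrFun (avgCocoGrad_comp_perm E r c p (fun _ => x) (Equiv.swap v w)) v
      rw [Function.comp_apply, Equiv.swap_apply_left] at h
      exact h.symm
  have htotal : ∑ w, avgCocoGrad E r c p (fun _ => x) w = ∑ w, cocoGrad E r c p (fun _ => x) w := by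
    have hfac : (Nat.factorial (Fintype.card V) : ℝ) ≠ 0 := by positivity
    simp only [avgCocoGrad, ← mul_sum, Function.comp_def]
    rw [sum_comm]
    simp only [Equiv.sum_comp, sum_const, card_univ, Fintype.card_perm, nsmul_eq_mul]
    field_simp
  simp only [hflat, sum_const, card_univ, nsmul_eq_mul, sum_cocoGrad, softmaxAvg_xi_const] at htotal
  have hn : (Fintype.card V : ℝ) ≠ 0 := by positivity
  rw [lamc] at htotal
  field_simp
  linear_combination htotal

end ConstantPoint

theorem ODE_solution_comp_eq_of_equivariant {ι : Type*} [Fintype ι]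
    {f : (ι → ℝ) → ι → ℝ} {K : NNReal} (hf : LipschitzWith K f) {σ : ι → ι}
    (hfσ : ∀ x, f (x ∘ σ) = f x ∘ σ) {μ : ℝ → ι → ℝ}
    (hμ : ∀ t ∈ Set.Ici (0 : ℝ), HasDerivWithinAt μ (f (μ t)) (Set.Ici 0) t)
    (h0 : μ 0 ∘ σ = μ 0) {t : ℝ} (ht : 0 ≤ t) :
    μ t ∘ σ = μ t := by
  have hμσ : ∀ s ∈ Set.Ici (0 : ℝ),
      HasDerivWithinAt (fun s => μ s ∘ σ) (f (μ s ∘ σ)) (Set.Ici 0) s := fun s hs => by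
    rw [hfσ]
    exact hasDerivWithinAt_pi.2 fun i => hasDerivWithinAt_pi.1 (hμ s hs) (σ i)
  refine ODE_solution_unique (v := fun _ => f) (fun _ => hf)
    (fun s hs => (hμσ s hs.1).continuousWithinAt.mono Set.Icc_subset_Ici_self)
    (fun s hs => (hμσ s hs.1).mono (Set.Ici_subset_Ici.2 hs.1))
    (fun s hs => (hμ s hs.1).continuousWithinAt.mono Set.Icc_subset_Ici_self)
    (fun s hs => (hμ s hs.1).mono (Set.Ici_subset_Ici.2 hs.1)) h0 ⟨ht, le_rfl⟩

theorem stmt7_general {V : Type*} [Fintype V] [DecidableEq V]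
    (E : Finset (V × V)) (r : V) (c : ℕ)
    (p : V)
    (α : ℝ)
    (μ : ℝ → V → ℝ) (hinit : ∀ v : V, μ 0 v = 0)
    (hflow : ∀ t ∈ Set.Ici (0 : ℝ), ∀ v : V, ∃ D : ℝ,
      HasDerivAt (fun x => avgCocoLoss E r c p (Function.update (μ t) v x)) D (μ t v)
      ∧ HasDerivWithinAt (fun s => μ s v) (-α * D) (Set.Ici (0 : ℝ)) t) :
    ∃ μbar : ℝ → ℝ,
      (∀ t ∈ Set.Ici (0 : ℝ), ∀ v : V, μ t v = μbar t)
      ∧ ∀ t ∈ Set.Ici (0 : ℝ),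
          HasDerivWithinAt μbar
            ((α / ((Fintype.card V : ℝ) * Real.sqrt ((ball E r c).card : ℝ)))
              * ((degc E r c p : ℝ) - Fc E r c (μbar t)))
            (Set.Ici (0 : ℝ)) t := by
  have : Nonempty V := ⟨p⟩
  have hμ : ∀ t ∈ Set.Ici (0 : ℝ),
      HasDerivWithinAt μ (-α • avgCocoGrad E r c p (μ t)) (Set.Ici 0) t := fun t ht =>
    hasDerivWithinAt_pi.2 fun v => by
      obtain ⟨D, hD, hμv⟩ := hflow t ht v
      rwa [hD.unique (hasDerivAt_avgCocoLoss_update E r c p (μ t) v)] at hμv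
  have hsymm : ∀ t ∈ Set.Ici (0 : ℝ), ∀ σ : Equiv.Perm V, μ t ∘ σ = μ t := fun t ht σ =>
    ODE_solution_comp_eq_of_equivariant
      ((lipschitzWith_smul (-α)).comp (lipschitzWith_avgCocoGrad E r c p))
      (fun x => by simp only [Function.comp_apply, avgCocoGrad_comp_perm]; rfl) hμ
      (funext fun v => by simp [hinit]) ht
  have hconst : ∀ t ∈ Set.Ici (0 : ℝ), μ t = fun _ => μ t p := fun t ht => funext fun v => by
    simpa using (congrFun (hsymm t ht (Equiv.swap v p)) v).symm
  refine ⟨fun t => μ t p, fun t ht v => congrFun (hconst t ht) v, fun t ht => ?_⟩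
  have hp := hasDerivWithinAt_pi.1 (hμ t ht) p
  rw [hconst t ht, Pi.smul_apply, avgCocoGrad_const, smul_eq_mul] at hp
  exact hp.congr_deriv (by ring)

/-- under gradient flow on the permutation-averaged coconut loss started
at 0, all coordinates of μ(t) stay equal to a common scalar μ̄(t), which satisfies the
ODE  μ̄'(t) = (α/(n√K))·(d_p − F(μ̄(t))). -/
theorem stmt7 {V : Type*} [Fintype V] [DecidableEq V]
    (E : Finset (V × V)) (r : V) (c : ℕ)
    (p : V) (hp : p ∈ ball E r (c + 1)) (hdp : 1 ≤ degc E r c p)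
    (α : ℝ) (hα : 0 < α)
    (μ : ℝ → V → ℝ) (hinit : ∀ v : V, μ 0 v = 0)
    (hflow : ∀ t ∈ Set.Ici (0 : ℝ), ∀ v : V, ∃ D : ℝ,
      HasDerivAt (fun x => avgCocoLoss E r c p (Function.update (μ t) v x)) D (μ t v)
      ∧ HasDerivWithinAt (fun s => μ s v) (-α * D) (Set.Ici (0 : ℝ)) t) :
    ∃ μbar : ℝ → ℝ,
      (∀ t ∈ Set.Ici (0 : ℝ), ∀ v : V, μ t v = μbar t)
      ∧ ∀ t ∈ Set.Ici (0 : ℝ),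
          HasDerivWithinAt μbar
            ((α / ((Fintype.card V : ℝ) * Real.sqrt ((ball E r c).card : ℝ)))
              * ((degc E r c p : ℝ) - Fc E r c (μbar t)))
            (Set.Ici (0 : ℝ)) t :=
  stmt7_general E r c p α μ hinit hflow
end

section
/- Assume c0 ≥ 1 and d_max ≥ 1. Let α > 0 and let μ : [0, ∞) → ℝ be differentiable with μ(0) = 0 and μ'(t) = (α/(n√K))·(d_max − F(μ(t))) for all t ≥ 0. Then μ'(t) > 0 for all t ≥ 0, μ(t) → +∞ as t → ∞, and for all t ≥ 0 one has μ(t) ≥ (1/(λ·d_max)) · ln( 1 + (α·λ·d_max²·c0·e^{−λ} / (2·n²·√K)) · t ). -/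
open Finset Filter Matrix

variable {V : Type*}

open Real

/-!
Along the flow `μ` stays nonnegative and `d_max − F(μ) ≥ d_max c0 e^{−λ} e^{−λ d_max μ} / n`,
because `F` is a weighted average of the degrees `d_u ≤ d_max` that also puts the mass `c0`
on degree zero, and `E_+(μ) + c0 ≤ n e^{λ(1 + d_max μ)}`. So `μ' ≥ A e^{−β μ}` with
`β = λ d_max`, whence `t ↦ e^{β μ(t)} − β A t` is nondecreasing and `e^{β μ(t)} ≥ 1 + β A t`.
The stated bound is this one with `A` halved.
-/

theorem Convex.monotoneOn_of_hasDerivWithinAt_nonneg {D : Set ℝ} (hD : Convex ℝ D)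
    {f f' : ℝ → ℝ} (hf : ∀ x ∈ D, HasDerivWithinAt f (f' x) D x)
    (hf'₀ : ∀ x ∈ D, 0 ≤ f' x) : MonotoneOn f D :=
  _root_.monotoneOn_of_hasDerivWithinAt_nonneg hD (fun x hx => (hf x hx).continuousWithinAt)
    (fun x hx => (hf x (interior_subset hx)).mono interior_subset)
    (fun x hx => hf'₀ x (interior_subset hx))

/-- Comparison principle for `f' ≥ A e^{−β f}`, whose solutions with equality are
`e^{β f(t)} = e^{β f(a)} + β A (t − a)`. -/
theorem Convex.exp_mul_add_le_of_hasDerivWithinAt {D : Set ℝ} (hD : Convex ℝ D)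
    {f f' : ℝ → ℝ} {A β : ℝ} (hβ : 0 ≤ β) (hf : ∀ x ∈ D, HasDerivWithinAt f (f' x) D x)
    (hf' : ∀ x ∈ D, A * exp (-(β * f x)) ≤ f' x) {a t : ℝ} (ha : a ∈ D) (ht : t ∈ D)
    (hat : a ≤ t) : exp (β * f a) + β * A * (t - a) ≤ exp (β * f t) := by
  have hg : ∀ x ∈ D, HasDerivWithinAt (fun x => exp (β * f x) - β * A * x)
      (exp (β * f x) * (β * f' x) - β * A) D x := fun x hx =>
    (((hf x hx).const_mul β).exp).sub ((hasDerivWithinAt_id x D).const_mul (β * A) |>.congr_deriv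
      (mul_one _))
  have hg' : ∀ x ∈ D, 0 ≤ exp (β * f x) * (β * f' x) - β * A := fun x hx => by
    have hinv : exp (β * f x) * exp (-(β * f x)) = 1 := by rw [← exp_add]; simp
    have := mul_le_mul_of_nonneg_left (mul_le_mul_of_nonneg_left (hf' x hx) hβ)
      (exp_pos (β * f x)).le
    linear_combination this - β * A * hinv
  have := hD.monotoneOn_of_hasDerivWithinAt_nonneg hg hg' ha ht hat
  linarith

theorem inv_mul_log_one_add_le_of_hasDerivWithinAt {f G : ℝ → ℝ} {A β : ℝ} (hβ : 0 < β)
    (hA : 0 ≤ A) (hf0 : f 0 = 0)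
    (hf : ∀ t ∈ Set.Ici 0, HasDerivWithinAt f (G (f t)) (Set.Ici 0) t) (hG : ∀ x, 0 ≤ G x)
    (hAG : ∀ x, 0 ≤ x → A * exp (-(β * x)) ≤ G x) {t : ℝ} (ht : 0 ≤ t) :
    β⁻¹ * log (1 + β * A * t) ≤ f t := by
  have hf_nonneg : ∀ s ∈ Set.Ici 0, 0 ≤ f s := fun s hs => hf0 ▸
    (convex_Ici 0).monotoneOn_of_hasDerivWithinAt_nonneg hf (fun _ _ => hG _) Set.self_mem_Ici hs hs
  have := (convex_Ici 0).exp_mul_add_le_of_hasDerivWithinAt hβ.le hf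
    (fun s hs => hAG _ (hf_nonneg s hs)) Set.self_mem_Ici ht ht
  rw [hf0, mul_zero, exp_zero, sub_zero] at this
  rw [inv_mul_le_iff₀ hβ, ← log_exp (β * f t)]
  exact log_le_log (by positivity) this

theorem mul_div_le_sub_sum_mul_div {ι : Type*} (s : Finset ι) {w d : ι → ℝ} {D c₀ : ℝ}
    (hw : ∀ i ∈ s, 0 ≤ w i) (hd : ∀ i ∈ s, d i ≤ D) (hc₀ : 0 < c₀) :
    D * c₀ / (∑ i ∈ s, w i + c₀) ≤ D - (∑ i ∈ s, d i * w i) / (∑ i ∈ s, w i + c₀) := by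
  have hW : 0 < ∑ i ∈ s, w i + c₀ := by linarith [sum_nonneg hw]
  have hS : ∑ i ∈ s, d i * w i ≤ D * ∑ i ∈ s, w i := by
    rw [mul_sum]
    exact sum_le_sum fun i hi => mul_le_mul_of_nonneg_right (hd i hi) (hw i hi)
  rw [le_sub_iff_add_le, ← add_div, div_le_iff₀ hW]
  linarith

section Fc

variable [Fintype V] [DecidableEq V] (E : Finset (V × V)) (r : V) (c : ℕ)

theorem mem_ball_self : r ∈ ball E r c := by
  induction c with
  | zero => simp [ball]
  | succ j ih => simp [ball, ih]

theorem lamc_pos : 0 < lamc E r c := by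
  have : (0 : ℝ) < (ball E r c).card := by exact_mod_cast card_pos.mpr ⟨r, mem_ball_self E r c⟩
  simpa [lamc] using this

theorem degc_le_sup (u : V) : (degc E r c u : ℝ) ≤ (univ.sup (degc E r c) : ℕ) := by
  exact_mod_cast le_sup (mem_univ u)

/-- `E_+(x)`; the denominator of `Fc E r c x` is `E_+(x) + c0`. -/
noncomputable def expPlus (x : ℝ) : ℝ :=
  ∑ u ∈ ball E r (c + 1),
    exp (lamc E r c * ((if u ∈ ball E r c then 1 else 0) + x * (degc E r c u : ℝ)))

theorem expPlus_nonneg (x : ℝ) : 0 ≤ expPlus E r c x :=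
  sum_nonneg fun _ _ => (exp_pos _).le

variable {E r c}

theorem card_sub_card_ball_pos (hc0 : (ball E r (c + 1)).card + 1 ≤ Fintype.card V) :
    (0 : ℝ) < (Fintype.card V : ℝ) - (ball E r (c + 1)).card := by
  rw [sub_pos]; exact_mod_cast hc0

theorem dmax_mul_div_le_sub_Fc (hc0 : (ball E r (c + 1)).card + 1 ≤ Fintype.card V) (x : ℝ) :
    ((univ.sup (degc E r c) : ℕ) : ℝ) * ((Fintype.card V : ℝ) - (ball E r (c + 1)).card)
        / (expPlus E r c x + ((Fintype.card V : ℝ) - (ball E r (c + 1)).card))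
      ≤ ((univ.sup (degc E r c) : ℕ) : ℝ) - Fc E r c x :=
  mul_div_le_sub_sum_mul_div _ (fun _ _ => (exp_pos _).le) (fun u _ => degc_le_sup E r c u)
    (card_sub_card_ball_pos hc0)

theorem Fc_lt_dmax (hc0 : (ball E r (c + 1)).card + 1 ≤ Fintype.card V)
    (hdmax : 1 ≤ univ.sup (degc E r c)) (x : ℝ) :
    Fc E r c x < ((univ.sup (degc E r c) : ℕ) : ℝ) := by
  have := card_sub_card_ball_pos hc0
  have hd : (0 : ℝ) < (univ.sup (degc E r c) : ℕ) := by exact_mod_cast hdmax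
  have := expPlus_nonneg E r c x
  refine sub_pos.mp (lt_of_lt_of_le ?_ (dmax_mul_div_le_sub_Fc hc0 x))
  positivity

theorem expPlus_add_le (hc0 : (ball E r (c + 1)).card ≤ Fintype.card V) {x : ℝ} (hx : 0 ≤ x) :
    expPlus E r c x + ((Fintype.card V : ℝ) - (ball E r (c + 1)).card)
      ≤ Fintype.card V * exp (lamc E r c * (1 + (univ.sup (degc E r c) : ℕ) * x)) := by
  set M := exp (lamc E r c * (1 + (univ.sup (degc E r c) : ℕ) * x))
  have hc0' : (0 : ℝ) ≤ (Fintype.card V : ℝ) - (ball E r (c + 1)).card := by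
    rw [sub_nonneg]; exact_mod_cast hc0
  have hM : 1 ≤ M := one_le_exp (by have := lamc_pos E r c; positivity)
  have hE : expPlus E r c x ≤ (ball E r (c + 1)).card * M := by
    rw [← nsmul_eq_mul, ← sum_const]
    refine sum_le_sum fun u _ => exp_le_exp.mpr <| mul_le_mul_of_nonneg_left ?_ (lamc_pos E r c).le
    have hind : (if u ∈ ball E r c then (1 : ℝ) else 0) ≤ 1 := by split_ifs <;> norm_num
    nlinarith [degc_le_sup E r c u]
  nlinarith

theorem exp_neg_le_sub_Fc (hc0 : (ball E r (c + 1)).card + 1 ≤ Fintype.card V)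
    {x : ℝ} (hx : 0 ≤ x) :
    ((univ.sup (degc E r c) : ℕ) : ℝ) * ((Fintype.card V : ℝ) - (ball E r (c + 1)).card)
        * exp (-lamc E r c) / Fintype.card V
        * exp (-(lamc E r c * (univ.sup (degc E r c) : ℕ) * x))
      ≤ ((univ.sup (degc E r c) : ℕ) : ℝ) - Fc E r c x := by
  have := card_sub_card_ball_pos hc0
  have := expPlus_nonneg E r c x
  refine le_trans (le_of_eq ?_) ((div_le_div_of_nonneg_left (by positivity) (by positivity)
    (expPlus_add_le (by omega) hx)).trans (dmax_mul_div_le_sub_Fc hc0 x))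
  rw [mul_add, mul_one, exp_add, exp_neg, exp_neg, ← mul_assoc]
  field_simp

end Fc

/-- the ODE μ' = (α/(n√K))·(d_max − F(μ)) started at 0 has strictly
positive derivative, diverges to +∞, and satisfies a logarithmic lower bound. -/
theorem stmt10 {V : Type*} [Fintype V] [DecidableEq V]
    (E : Finset (V × V)) (r : V) (c : ℕ)
    (hc0 : (ball E r (c + 1)).card + 1 ≤ Fintype.card V)
    (hdmax : 1 ≤ Finset.univ.sup (degc E r c))
    (α : ℝ) (hα : 0 < α)
    (μ : ℝ → ℝ) (hinit : μ 0 = 0)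
    (hode : ∀ t ∈ Set.Ici (0 : ℝ),
      HasDerivWithinAt μ
        ((α / ((Fintype.card V : ℝ) * Real.sqrt ((ball E r c).card : ℝ)))
          * (((Finset.univ.sup (degc E r c) : ℕ) : ℝ) - Fc E r c (μ t)))
        (Set.Ici (0 : ℝ)) t) :
    (∀ t ∈ Set.Ici (0 : ℝ), 0 < derivWithin μ (Set.Ici (0 : ℝ)) t)
    ∧ Filter.Tendsto μ Filter.atTop Filter.atTop
    ∧ ∀ t ∈ Set.Ici (0 : ℝ),
        (1 / (lamc E r c * ((Finset.univ.sup (degc E r c) : ℕ) : ℝ)))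
            * Real.log (1 +
                (α * lamc E r c * ((Finset.univ.sup (degc E r c) : ℕ) : ℝ) ^ 2
                    * ((Fintype.card V : ℝ) - ((ball E r (c + 1)).card : ℝ))
                    * Real.exp (-(lamc E r c))
                  / (2 * (Fintype.card V : ℝ) ^ 2 * Real.sqrt ((ball E r c).card : ℝ)))
                  * t)
          ≤ μ t := by
  set d : ℝ := ((univ.sup (degc E r c) : ℕ) : ℝ)
  set c₀ : ℝ := (Fintype.card V : ℝ) - (ball E r (c + 1)).card
  set n : ℝ := (Fintype.card V : ℝ)
  set C := α / (n * √((ball E r c).card : ℝ))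
  set β := lamc E r c * d
  set A := C * (d * c₀ * exp (-lamc E r c) / n)
  have hc₀ : 0 < c₀ := card_sub_card_ball_pos hc0
  have hd : 0 < d := Nat.cast_pos.mpr hdmax
  have hn : 0 < n := by linarith [(Nat.cast_nonneg _ : (0 : ℝ) ≤ (ball E r (c + 1)).card)]
  have hβ : 0 < β := mul_pos (lamc_pos E r c) hd
  have hC : 0 < C := by have := one_div_pos.mp (lamc_pos E r c); positivity
  have hA : 0 < A := by positivity
  have hμ' : ∀ x, 0 < C * (d - Fc E r c x) := fun x =>
    mul_pos hC (sub_pos.mpr (Fc_lt_dmax hc0 hdmax x))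
  have hlog : ∀ t ∈ Set.Ici (0 : ℝ), 1 / β * log (1 + β * A / 2 * t) ≤ μ t := fun t ht => by
    refine le_trans ?_ (inv_mul_log_one_add_le_of_hasDerivWithinAt hβ hA.le hinit hode
      (fun x => (hμ' x).le) (fun x hx => ?_) ht)
    · have : 0 ≤ t := ht
      rw [one_div]; gcongr; linarith [mul_pos hβ hA]
    · rw [mul_assoc]
      exact mul_le_mul_of_nonneg_left (exp_neg_le_sub_Fc hc0 hx) hC.le
  have hCs : α * lamc E r c * d ^ 2 * c₀ * exp (-lamc E r c)
      / (2 * n ^ 2 * √((ball E r c).card : ℝ)) = β * A / 2 := by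
    simp only [β, A, C]; field_simp
  have hlog_tendsto : Tendsto (fun t => 1 / β * log (1 + β * A / 2 * t)) atTop atTop :=
    (tendsto_log_atTop.comp (tendsto_atTop_add_const_left _ 1
      (tendsto_id.const_mul_atTop (by positivity)))).const_mul_atTop (by positivity)
  refine ⟨fun t ht => ?_, tendsto_atTop_mono' _ ((eventually_ge_atTop 0).mono hlog) hlog_tendsto,
    fun t ht => hCs ▸ hlog t ht⟩
  rw [(hode t ht).derivWithin (uniqueDiffOn_Ici 0 t ht)]
  exact hμ' _
end
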